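/- Suppose each value function v i is differentiable on [0, b i] with 0 ≤ v i'(s) ≤ pmax for all s ∈ [0, b i]. Then for every probability measure Q on Ω, the penalty satisfies α(Q) = sup over s with 0 ≤ s i ≤ b i for all i of ∑ i, ( v i (s i) - p* i * s i ), where p* i = ∫ p i dQ(p). -/

import Mathlib

open MeasureTheory

noncomputable section

/-- The set of possible price scenarios. -/
abbrev Omega (N : ℕ) (pmax : ℝ) : Type :=
  {p : Fin N → ℝ // ∀ i, 0 ≤ p i ∧ p i ≤ pmax}

/-- A position `S = (w, s)`: collected revenue `w ≥ 0` and remaining budgets `0 ≤ s i ≤ b i`. -/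
def IsPosition (N : ℕ) (b : Fin N → ℝ) (S : ℝ × (Fin N → ℝ)) : Prop :=
  0 ≤ S.1 ∧ ∀ i, 0 ≤ S.2 i ∧ S.2 i ≤ b i

/-- Return function of a position: `X_S(p) = w + ∑ i, p i * s i`. -/
def ret (N : ℕ) (pmax : ℝ) (S : ℝ × (Fin N → ℝ)) (p : Omega N pmax) : ℝ :=
  S.1 + ∑ i, p.1 i * S.2 i

/-- Generating function `θ(S) = -w - ∑ i, v i (s i)`. -/
def theta (N : ℕ) (v : Fin N → ℝ → ℝ) (S : ℝ × (Fin N → ℝ)) : ℝ :=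
  -S.1 - ∑ i, v i (S.2 i)

/-- Risk measure `ρ(X) = inf { θ(S) : S a position with X_S ≤ X pointwise }`, valued
in `ℝ ∪ {+∞}` (the infimum of the empty set is `+∞`). -/
def rho (N : ℕ) (b : Fin N → ℝ) (pmax : ℝ) (v : Fin N → ℝ → ℝ)
    (X : Omega N pmax → ℝ) : EReal :=
  sInf {t : EReal | ∃ S : ℝ × (Fin N → ℝ), IsPosition N b S ∧
    (∀ p, ret N pmax S p ≤ X p) ∧ t = ((theta N v S : ℝ) : EReal)}

/-- A bounded function on `Ω`. -/
def Bounded (N : ℕ) (pmax : ℝ) (X : Omega N pmax → ℝ) : Prop :=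
  ∃ C, ∀ p, |X p| ≤ C

/-- Penalty function `α(Q) = sup over bounded measurable X of (∫ (-X) dQ - ρ(X))`. -/
def alphaPen (N : ℕ) (b : Fin N → ℝ) (pmax : ℝ) (v : Fin N → ℝ → ℝ)
    (Q : Measure (Omega N pmax)) : EReal :=
  ⨆ X ∈ {X : Omega N pmax → ℝ | Measurable X ∧ Bounded N pmax X},
    (((∫ p, -X p ∂Q : ℝ) : EReal) - rho N b pmax v X)

/-
Since `ρ` is an infimum over dominated positions, `α(Q)` is a double supremum of
`E_Q[-X] - θ(S)` over bounded `X` and positions `S` with `X_S ≤ X`. For fixed `S` the inner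
supremum is attained at `X = X_S` by monotonicity of the integral, and
`E_Q[-X_S] - θ(S) = ∑ i, (v i (s i) - p* i * s i)` because `E_Q[X_S] = w + ∑ i, p* i * s i`:
the revenue `w` cancels.
-/

theorem EReal.coe_sub_sInf (a : ℝ) (T : Set EReal) :
    (a : EReal) - sInf T = sSup ((fun t => (a : EReal) - t) '' T) := by
  refine Antitone.map_sInf_of_continuousAt ?_ (fun _ _ h => EReal.sub_le_sub le_rfl h) (by simp)
  exact (EReal.continuousAt_add (.inl (EReal.coe_ne_top a)) (.inl (EReal.coe_ne_bot a))).comp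
    (continuousAt_const.prodMk continuous_neg.continuousAt)

section Positions

variable {N : ℕ} {pmax : ℝ}

theorem abs_coord_le (p : Omega N pmax) (i : Fin N) : |p.1 i| ≤ pmax :=
  (abs_of_nonneg (p.2 i).1).trans_le (p.2 i).2

theorem measurable_coord (i : Fin N) : Measurable fun p : Omega N pmax => p.1 i :=
  (measurable_pi_apply i).comp measurable_subtype_coe

theorem Bounded.integrable {X : Omega N pmax → ℝ} (hm : Measurable X) (hX : Bounded N pmax X)
    (Q : Measure (Omega N pmax)) [IsFiniteMeasure Q] : Integrable X Q :=
  let ⟨C, hC⟩ := hX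
  .of_bound hm.aestronglyMeasurable C (.of_forall hC)

theorem bounded_coord (i : Fin N) : Bounded N pmax fun p => p.1 i :=
  ⟨pmax, fun p => abs_coord_le p i⟩

theorem measurable_ret (S : ℝ × (Fin N → ℝ)) : Measurable (ret N pmax S) :=
  measurable_const.add (Finset.measurable_sum _ fun i _ => (measurable_coord i).mul_const _)

theorem bounded_ret (S : ℝ × (Fin N → ℝ)) : Bounded N pmax (ret N pmax S) := by
  refine ⟨|S.1| + ∑ i, pmax * |S.2 i|, fun p => ?_⟩
  calc |ret N pmax S p| ≤ |S.1| + ∑ i, |p.1 i * S.2 i| :=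
        (abs_add_le _ _).trans (add_le_add_right (Finset.abs_sum_le_sum_abs _ _) _)
    _ ≤ |S.1| + ∑ i, pmax * |S.2 i| := by
        gcongr with i
        rw [abs_mul]
        exact mul_le_mul_of_nonneg_right (abs_coord_le p i) (abs_nonneg _)

variable (Q : Measure (Omega N pmax)) [IsProbabilityMeasure Q]

theorem integral_ret (S : ℝ × (Fin N → ℝ)) :
    ∫ p, ret N pmax S p ∂Q = S.1 + ∑ i, (∫ p, p.1 i ∂Q) * S.2 i := by
  have hint i : Integrable (fun p : Omega N pmax => p.1 i * S.2 i) Q :=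
    ((bounded_coord i).integrable (measurable_coord i) Q).mul_const _
  simp only [ret]
  rw [integral_add (integrable_const _) (integrable_finsetSum _ fun i _ => hint i),
    integral_finsetSum _ fun i _ => hint i, integral_const, probReal_univ, one_smul]
  simp only [integral_mul_const]

theorem integral_neg_ret_sub_theta (v : Fin N → ℝ → ℝ) (S : ℝ × (Fin N → ℝ)) :
    ∫ p, -ret N pmax S p ∂Q - theta N v S = ∑ i, (v i (S.2 i) - (∫ p, p.1 i ∂Q) * S.2 i) := by
  rw [integral_neg, integral_ret, theta, Finset.sum_sub_distrib]
  ring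

end Positions

section Penalty

variable {N : ℕ} {b : Fin N → ℝ} {pmax : ℝ} {v : Fin N → ℝ → ℝ}

theorem rho_ret_le_theta {S : ℝ × (Fin N → ℝ)} (hS : IsPosition N b S) :
    rho N b pmax v (ret N pmax S) ≤ theta N v S :=
  sInf_le ⟨S, hS, fun _ => le_rfl, rfl⟩

variable (Q : Measure (Omega N pmax)) [IsProbabilityMeasure Q]

theorem alphaPen_le :
    alphaPen N b pmax v Q ≤ ⨆ s ∈ {s : Fin N → ℝ | ∀ i, 0 ≤ s i ∧ s i ≤ b i},
      (((∑ i, (v i (s i) - (∫ p : Omega N pmax, p.1 i ∂Q) * s i) : ℝ) : EReal)) := by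
  refine iSup₂_le fun X ⟨hXm, hXb⟩ => ?_
  rw [rho, EReal.coe_sub_sInf]
  refine sSup_le ?_
  rintro _ ⟨_, ⟨S, hS, hSX, rfl⟩, rfl⟩
  have hmono : ∫ p, -X p ∂Q ≤ ∫ p, -ret N pmax S p ∂Q :=
    integral_mono (hXb.integrable hXm Q).neg
      ((bounded_ret S).integrable (measurable_ret S) Q).neg fun p => neg_le_neg (hSX p)
  calc ((∫ p, -X p ∂Q : ℝ) : EReal) - (theta N v S : EReal)
      ≤ ((∫ p, -ret N pmax S p ∂Q - theta N v S : ℝ) : EReal) := by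
        rw [EReal.coe_sub]
        exact EReal.sub_le_sub (EReal.coe_le_coe_iff.2 hmono) le_rfl
    _ ≤ _ := by
        rw [integral_neg_ret_sub_theta]
        exact le_iSup₂_of_le S.2 hS.2 le_rfl

theorem le_alphaPen :
    ⨆ s ∈ {s : Fin N → ℝ | ∀ i, 0 ≤ s i ∧ s i ≤ b i},
      (((∑ i, (v i (s i) - (∫ p : Omega N pmax, p.1 i ∂Q) * s i) : ℝ) : EReal)) ≤
    alphaPen N b pmax v Q := by
  refine iSup₂_le fun s hs => ?_
  have hS : IsPosition N b (0, s) := ⟨le_rfl, hs⟩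
  calc (((∑ i, (v i (s i) - (∫ p : Omega N pmax, p.1 i ∂Q) * s i) : ℝ) : EReal))
      = ((∫ p, -ret N pmax (0, s) p ∂Q : ℝ) : EReal) - (theta N v (0, s) : EReal) := by
        rw [← EReal.coe_sub, integral_neg_ret_sub_theta]
    _ ≤ ((∫ p, -ret N pmax (0, s) p ∂Q : ℝ) : EReal) - rho N b pmax v (ret N pmax (0, s)) :=
        EReal.sub_le_sub le_rfl (rho_ret_le_theta hS)
    _ ≤ alphaPen N b pmax v Q :=
        le_iSup₂_of_le (ret N pmax (0, s)) ⟨measurable_ret _, bounded_ret _⟩ le_rfl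

end Penalty

theorem stmt8_general (N : ℕ) (b : Fin N → ℝ) (pmax : ℝ) (v : Fin N → ℝ → ℝ)
    (Q : Measure (Omega N pmax)) (hQ : IsProbabilityMeasure Q) :
    alphaPen N b pmax v Q =
      ⨆ s ∈ {s : Fin N → ℝ | ∀ i, 0 ≤ s i ∧ s i ≤ b i},
        (((∑ i, (v i (s i) - (∫ p : Omega N pmax, p.1 i ∂Q) * s i) : ℝ) : EReal)) :=
  le_antisymm (alphaPen_le Q) (le_alphaPen Q)

/-- for differentiable value functions with `0 ≤ v i' ≤ pmax`, the penalty is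
`α(Q) = sup over s in the budget box of ∑ i, (v i (s i) - p* i * s i)`, where
`p* i = ∫ p i dQ(p)`. -/
theorem stmt8 (N : ℕ) (hN : 1 ≤ N) (b : Fin N → ℝ) (hb : ∀ i, 0 < b i)
    (pmax : ℝ) (hpmax : 0 < pmax)
    (v v' : Fin N → ℝ → ℝ)
    (hderiv : ∀ i, ∀ s ∈ Set.Icc (0:ℝ) (b i),
      HasDerivWithinAt (v i) (v' i s) (Set.Icc (0:ℝ) (b i)) s)
    (hbound : ∀ i, ∀ s ∈ Set.Icc (0:ℝ) (b i), 0 ≤ v' i s ∧ v' i s ≤ pmax)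
    (Q : Measure (Omega N pmax)) (hQ : IsProbabilityMeasure Q) :
    alphaPen N b pmax v Q =
      ⨆ s ∈ {s : Fin N → ℝ | ∀ i, 0 ≤ s i ∧ s i ≤ b i},
        (((∑ i, (v i (s i) - (∫ p : Omega N pmax, p.1 i ∂Q) * s i) : ℝ) : EReal)) :=
  stmt8_general N b pmax v Q hQ
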